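/- arXiv:2507.11024 — 3 statements merged into one kernel-verified Lean document; each statement's English description precedes it below -/
import Mathlib

section
/- (Srivastava–Niukkanen integral representation.) Let $k \geq 1$, $\alpha_1,\dots,\alpha_k > -1$, $\beta > -1$, $n_1,\dots,n_k \in \mathbb{Z}_{\geq 0}$, and $x_1,\dots,x_k \in \mathbb{R}$. Then $L^{(\alpha_1+\cdots+\alpha_k+\beta+k)}_{n_1,\dots,n_k}(x_1,\dots,x_k) = \dfrac{(\alpha_1+\cdots+\alpha_k+\beta+k+1)_{n_1+\cdots+n_k}}{(\alpha_1+1)_{n_1}\cdots(\alpha_k+1)_{n_k}} \int_{E_k} \prod_{j=1}^{k} L_{n_j}^{(\alpha_j)}(x_j u_j)\, d\mu_{(\alpha_1+1,\dots,\alpha_k+1,\beta+1)}(\mathbf{u})$. -/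
open scoped BigOperators
open MeasureTheory

/-- The rising factorial (Pochhammer symbol) `(a)_m = a (a+1) ⋯ (a+m-1)`. -/
noncomputable def risingFactorial (a : ℝ) (m : ℕ) : ℝ := (ascPochhammer ℝ m).eval a

/-- The classical Laguerre polynomial `L_n^{(α)}(x)`. -/
noncomputable def laguerreP (n : ℕ) (α : ℝ) (x : ℝ) : ℝ :=
  risingFactorial (α + 1) n / (Nat.factorial n : ℝ) *
    ∑ j ∈ Finset.range (n + 1),
      risingFactorial (-(n : ℝ)) j / risingFactorial (α + 1) j * x ^ j / (Nat.factorial j : ℝ)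

/-- Erdélyi's multivariate Laguerre polynomial `L_{n_1,…,n_k}^{(α)}(x_1,…,x_k)`. -/
noncomputable def mvLaguerre (k : ℕ) (α : ℝ) (n : Fin k → ℕ) (x : Fin k → ℝ) : ℝ :=
  risingFactorial (α + 1) (∑ i, n i) / (∏ i, (Nat.factorial (n i) : ℝ)) *
    ∑ j ∈ Fintype.piFinset (fun i => Finset.range (n i + 1)),
      (∏ i, risingFactorial (-(n i : ℝ)) (j i)) / risingFactorial (α + 1) (∑ i, j i) *
        ∏ i, x i ^ (j i) / (Nat.factorial (j i) : ℝ)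

/-- The confluent Lauricella function `Φ₂^{(k)}[b₁,…,b_k; c; x₁,…,x_k]`. -/
noncomputable def Phi2 (k : ℕ) (b : Fin k → ℝ) (c : ℝ) (x : Fin k → ℝ) : ℝ :=
  ∑' j : Fin k → ℕ,
    (∏ i, risingFactorial (b i) (j i)) / risingFactorial c (∑ i, j i) *
      ∏ i, x i ^ (j i) / (Nat.factorial (j i) : ℝ)

/-- The confluent hypergeometric function `₁F₁[a; c; x]`. -/
noncomputable def oneF1 (a c x : ℝ) : ℝ :=
  ∑' j : ℕ, risingFactorial a j / risingFactorial c j * x ^ j / (Nat.factorial j : ℝ)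

/-- Rooney's constant `q_n = √((2n)!) / (2^{n+1/2} n!)`. -/
noncomputable def qSeq (n : ℕ) : ℝ :=
  Real.sqrt (Nat.factorial (2 * n) : ℝ) /
    ((2 : ℝ) ^ ((n : ℝ) + 1 / 2) * (Nat.factorial n : ℝ))

/-- The open standard simplex `E_k ⊆ ℝ^k`. -/
def simplexE (k : ℕ) : Set (Fin k → ℝ) := {u | (∀ i, 0 < u i) ∧ ∑ i, u i < 1}

/-- The density of the Dirichlet measure `μ_{(b₁,…,b_k,β)}` with respect to
Lebesgue measure on the simplex `E_k`. -/
noncomputable def dirichletDensity (k : ℕ) (b : Fin k → ℝ) (β : ℝ) (u : Fin k → ℝ) : ℝ :=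
  Real.Gamma (∑ i, b i + β) / ((∏ i, Real.Gamma (b i)) * Real.Gamma β) *
    (∏ i, u i ^ (b i - 1)) * (1 - ∑ i, u i) ^ (β - 1)

/-!
Expanding each `L_{n_j}^{(α_j)}(x_j u_j)` in powers of `u_j` turns the integrand into a
polynomial in `u`, and the Dirichlet moments
`∫ ∏ u_i^{m_i} dμ_{(b, β')} = ∏ (b_i)_{m_i} / (∑ b_i + β')_{∑ m_i}`
turn its integral term by term into the defining sum of Erdélyi's polynomial. The moments reduce,
via `Γ(b + m) = Γ(b) (b)_m`, to the Dirichlet integral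
`∫_{E_k} ∏ u_i^{c_i-1} (1 - ∑ u_i)^{d-1} du = ∏ Γ(c_i) Γ(d) / Γ(∑ c_i + d)`, which follows by
induction on `k`: integrating out `u_1` over `(0, 1 - ∑_{i>1} u_i)` is a rescaled Beta integral,
leaving the Dirichlet integrand in `k - 1` variables with `d` replaced by `c_1 + d`.
-/

open Set
open scoped ENNReal

lemma risingFactorial_pos {a : ℝ} (ha : 0 < a) (m : ℕ) : 0 < risingFactorial a m :=
  ascPochhammer_pos m a ha

lemma Real.Gamma_add_natCast_eq_mul_risingFactorial {a : ℝ} (ha : 0 < a) (m : ℕ) :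
    Real.Gamma (a + m) = Real.Gamma a * risingFactorial a m := by
  induction m with
  | zero => simp [risingFactorial]
  | succ m ih =>
    rw [Nat.cast_succ, ← add_assoc, Real.Gamma_add_one (by positivity), ih, risingFactorial,
      risingFactorial, ascPochhammer_succ_eval]
    ring

lemma lintegral_comp_mul_left (g : ℝ → ℝ≥0∞) {L : ℝ} (hL : L ≠ 0) :
    ∫⁻ x, g (L * x) = ENNReal.ofReal |L⁻¹| * ∫⁻ y, g y := by
  rw [← (measurableEmbedding_mulLeft₀ hL).lintegral_map, Real.map_volume_mul_left hL,
    lintegral_smul_measure, smul_eq_mul]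

namespace ProbabilityTheory

lemma lintegral_Ioo_rpow_mul_one_sub_rpow {a b : ℝ} (ha : 0 < a) (hb : 0 < b) :
    ∫⁻ x in Ioo 0 1, ENNReal.ofReal (x ^ (a - 1) * (1 - x) ^ (b - 1)) =
      ENNReal.ofReal (beta a b) := by
  have hB := beta_pos ha hb
  have h := lintegral_betaPDF_eq_one ha hb
  simp_rw [lintegral_betaPDF, mul_assoc, ENNReal.ofReal_mul (one_div_pos.2 hB).le] at h
  rw [lintegral_const_mul' _ _ ENNReal.ofReal_ne_top] at h
  rw [ENNReal.eq_inv_of_mul_eq_one_left ((mul_comm _ _).trans h), one_div,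
    ENNReal.ofReal_inv_of_pos hB, inv_inv]

lemma lintegral_Ioo_rpow_mul_sub_rpow {a b L : ℝ} (ha : 0 < a) (hb : 0 < b) (hL : 0 < L) :
    ∫⁻ t in Ioo 0 L, ENNReal.ofReal (t ^ (a - 1) * (L - t) ^ (b - 1)) =
      ENNReal.ofReal (L ^ (a + b - 1) * beta a b) := by
  set f : ℝ → ℝ≥0∞ := fun t => ENNReal.ofReal (t ^ (a - 1) * (L - t) ^ (b - 1))
  have hscale : ∀ x, (Ioo 0 L).indicator f (L * x) = ENNReal.ofReal (L ^ (a + b - 2)) *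
      (Ioo 0 1).indicator (fun x => ENNReal.ofReal (x ^ (a - 1) * (1 - x) ^ (b - 1))) x := by
    intro x
    by_cases hx : x ∈ Ioo (0 : ℝ) 1
    · have hLx : L * x ∈ Ioo 0 L := ⟨mul_pos hL hx.1, mul_lt_of_lt_one_right hL hx.2⟩
      rw [indicator_of_mem hLx, indicator_of_mem hx, ← ENNReal.ofReal_mul (by positivity)]
      simp only [f]
      congr 1
      rw [show L - L * x = L * (1 - x) by ring, Real.mul_rpow hL.le hx.1.le,
        Real.mul_rpow hL.le (by linarith [hx.2]), show a + b - 2 = (a - 1) + (b - 1) by ring,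
        Real.rpow_add hL]
      ring
    · have hLx : L * x ∉ Ioo 0 L := fun h =>
        hx ⟨pos_of_mul_pos_right h.1 hL.le, (mul_lt_iff_lt_one_right hL).1 h.2⟩
      rw [indicator_of_notMem hLx, indicator_of_notMem hx, mul_zero]
  calc ∫⁻ t in Ioo 0 L, f t
      = ENNReal.ofReal L * ∫⁻ x, (Ioo 0 L).indicator f (L * x) := by
        rw [lintegral_comp_mul_left _ hL.ne', ← mul_assoc, ← ENNReal.ofReal_mul hL.le,
          abs_of_pos (inv_pos.2 hL), mul_inv_cancel₀ hL.ne', ENNReal.ofReal_one, one_mul,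
          lintegral_indicator measurableSet_Ioo]
    _ = ENNReal.ofReal L * (ENNReal.ofReal (L ^ (a + b - 2)) * ENNReal.ofReal (beta a b)) := by
        simp_rw [hscale]
        rw [lintegral_const_mul' _ _ ENNReal.ofReal_ne_top, lintegral_indicator measurableSet_Ioo,
          lintegral_Ioo_rpow_mul_one_sub_rpow ha hb]
    _ = ENNReal.ofReal (L ^ (a + b - 1) * beta a b) := by
        rw [← ENNReal.ofReal_mul (by positivity), ← ENNReal.ofReal_mul hL.le,
          show a + b - 1 = 1 + (a + b - 2) by ring, Real.rpow_add hL, Real.rpow_one, mul_assoc]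

end ProbabilityTheory

noncomputable def dirichletWeight {k : ℕ} (c : Fin k → ℝ) (d : ℝ) (u : Fin k → ℝ) : ℝ :=
  (∏ i, u i ^ (c i - 1)) * (1 - ∑ i, u i) ^ (d - 1)

@[fun_prop]
lemma measurable_dirichletWeight {k : ℕ} (c : Fin k → ℝ) (d : ℝ) :
    Measurable (dirichletWeight c d) := by
  unfold dirichletWeight
  fun_prop

lemma dirichletWeight_nonneg {k : ℕ} (c : Fin k → ℝ) (d : ℝ) {u : Fin k → ℝ}
    (hu : u ∈ simplexE k) : 0 ≤ dirichletWeight c d u :=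
  mul_nonneg (Finset.prod_nonneg fun i _ => Real.rpow_nonneg (hu.1 i).le _)
    (Real.rpow_nonneg (by linarith [hu.2]) _)

lemma measurableSet_simplexE (k : ℕ) : MeasurableSet (simplexE k) := by
  unfold simplexE
  measurability

lemma cons_mem_simplexE_succ_iff {k : ℕ} {t : ℝ} {v : Fin k → ℝ} :
    (Fin.cons t v : Fin (k + 1) → ℝ) ∈ simplexE (k + 1) ↔
      v ∈ simplexE k ∧ t ∈ Ioo 0 (1 - ∑ i, v i) := by
  simp only [simplexE, mem_ofPred_eq, Fin.forall_fin_succ, Fin.cons_zero, Fin.cons_succ,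
    Fin.sum_univ_succ, mem_Ioo]
  constructor
  · rintro ⟨⟨ht, hv⟩, hsum⟩
    exact ⟨⟨hv, by linarith⟩, ht, by linarith⟩
  · rintro ⟨⟨hv, -⟩, ht, hsum⟩
    exact ⟨⟨ht, hv⟩, by linarith⟩

lemma dirichletWeight_cons {k : ℕ} (c : Fin (k + 1) → ℝ) (d t : ℝ) (v : Fin k → ℝ) :
    dirichletWeight c d (Fin.cons t v) =
      (∏ i, v i ^ (c i.succ - 1)) * (t ^ (c 0 - 1) * ((1 - ∑ i, v i) - t) ^ (d - 1)) := by
  simp only [dirichletWeight, Fin.prod_univ_succ, Fin.sum_univ_succ, Fin.cons_zero,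
    Fin.cons_succ]
  ring_nf

lemma lintegral_fin_cons {k : ℕ} {f : (Fin (k + 1) → ℝ) → ℝ≥0∞} (hf : Measurable f) :
    ∫⁻ u, f u = ∫⁻ v : Fin k → ℝ, ∫⁻ t : ℝ, f (Fin.cons t v) := by
  have := ((volume_preserving_piFinSuccAbove (fun _ : Fin (k + 1) => ℝ) 0).symm _)
  rw [← this.lintegral_comp hf, Measure.volume_eq_prod, lintegral_prod_symm _ (by fun_prop)]
  simp [Fin.consEquiv]

lemma lintegral_indicator_dirichletWeight_cons {k : ℕ} {c : Fin (k + 1) → ℝ} {d : ℝ}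
    (hc : 0 < c 0) (hd : 0 < d) (v : Fin k → ℝ) :
    ∫⁻ t, (simplexE (k + 1)).indicator (fun u => ENNReal.ofReal (dirichletWeight c d u))
        (Fin.cons t v) =
      (simplexE k).indicator (fun v => ENNReal.ofReal (ProbabilityTheory.beta (c 0) d *
        dirichletWeight (fun i => c i.succ) (c 0 + d) v)) v := by
  by_cases hv : v ∈ simplexE k
  · set L := 1 - ∑ i, v i
    have hL : 0 < L := sub_pos.2 hv.2
    have hP : 0 ≤ ∏ i, v i ^ (c i.succ - 1) :=
      Finset.prod_nonneg fun i _ => Real.rpow_nonneg (hv.1 i).le _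
    have hslice : ∀ t, (simplexE (k + 1)).indicator
        (fun u => ENNReal.ofReal (dirichletWeight c d u)) (Fin.cons t v) =
        ENNReal.ofReal (∏ i, v i ^ (c i.succ - 1)) * (Ioo 0 L).indicator
          (fun t => ENNReal.ofReal (t ^ (c 0 - 1) * (L - t) ^ (d - 1))) t := by
      intro t
      simp only [indicator, cons_mem_simplexE_succ_iff, hv, true_and]
      split_ifs
      · rw [dirichletWeight_cons, ENNReal.ofReal_mul hP]
      · rw [mul_zero]
    simp_rw [hslice]
    rw [lintegral_const_mul' _ _ ENNReal.ofReal_ne_top, lintegral_indicator measurableSet_Ioo,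
      ProbabilityTheory.lintegral_Ioo_rpow_mul_sub_rpow hc hd hL, ← ENNReal.ofReal_mul hP,
      indicator_of_mem hv]
    congr 1
    simp only [dirichletWeight, L]
    ring
  · have hslice : ∀ t, (simplexE (k + 1)).indicator
        (fun u => ENNReal.ofReal (dirichletWeight c d u)) (Fin.cons t v) = 0 :=
      fun t => indicator_of_notMem (fun h => hv (cons_mem_simplexE_succ_iff.1 h).1) _
    simp_rw [hslice, lintegral_zero, indicator_of_notMem hv]

lemma lintegral_dirichletWeight {k : ℕ} {c : Fin k → ℝ} (hc : ∀ i, 0 < c i) {d : ℝ}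
    (hd : 0 < d) :
    ∫⁻ u in simplexE k, ENNReal.ofReal (dirichletWeight c d u) =
      ENNReal.ofReal ((∏ i, Real.Gamma (c i)) * Real.Gamma d / Real.Gamma (∑ i, c i + d)) := by
  induction k generalizing d with
  | zero =>
    have huniv : simplexE 0 = univ := by ext u; simp [simplexE]
    simp [huniv, dirichletWeight, div_self (Real.Gamma_pos_of_pos hd).ne', volume_pi]
  | succ k ih =>
    have hc0 := hc 0
    rw [← lintegral_indicator (measurableSet_simplexE _),
      lintegral_fin_cons ((by fun_prop : Measurable _).indicator (measurableSet_simplexE _))]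
    simp_rw [lintegral_indicator_dirichletWeight_cons hc0 hd]
    rw [lintegral_indicator (measurableSet_simplexE _)]
    have hB := (ProbabilityTheory.beta_pos hc0 hd).le
    simp_rw [ENNReal.ofReal_mul hB]
    rw [lintegral_const_mul' _ _ ENNReal.ofReal_ne_top, ih (fun i => hc i.succ) (add_pos hc0 hd),
      ← ENNReal.ofReal_mul hB]
    congr 1
    have hΓ : Real.Gamma (c 0 + d) ≠ 0 := (Real.Gamma_pos_of_pos (add_pos hc0 hd)).ne'
    rw [ProbabilityTheory.beta, Fin.prod_univ_succ, Fin.sum_univ_succ,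
      show ∑ i : Fin k, c i.succ + (c 0 + d) = c 0 + ∑ i : Fin k, c i.succ + d by ring]
    field_simp

lemma integrableOn_dirichletWeight {k : ℕ} {c : Fin k → ℝ} (hc : ∀ i, 0 < c i) {d : ℝ}
    (hd : 0 < d) : IntegrableOn (dirichletWeight c d) (simplexE k) := by
  refine ⟨(measurable_dirichletWeight c d).aestronglyMeasurable, ?_⟩
  rw [hasFiniteIntegral_iff_ofReal ((ae_restrict_iff' (measurableSet_simplexE k)).2
    (ae_of_all _ fun u => dirichletWeight_nonneg c d)), lintegral_dirichletWeight hc hd]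
  exact ENNReal.ofReal_lt_top

lemma integral_dirichletWeight {k : ℕ} {c : Fin k → ℝ} (hc : ∀ i, 0 < c i) {d : ℝ}
    (hd : 0 < d) :
    ∫ u in simplexE k, dirichletWeight c d u =
      (∏ i, Real.Gamma (c i)) * Real.Gamma d / Real.Gamma (∑ i, c i + d) := by
  rw [integral_eq_lintegral_of_nonneg_ae ((ae_restrict_iff' (measurableSet_simplexE k)).2
    (ae_of_all _ fun u => dirichletWeight_nonneg c d)) (by fun_prop),
    lintegral_dirichletWeight hc hd, ENNReal.toReal_ofReal]
  exact div_nonneg (mul_nonneg (Finset.prod_nonneg fun i _ => (Real.Gamma_pos_of_pos (hc i)).le)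
    (Real.Gamma_pos_of_pos hd).le) (Real.Gamma_nonneg_of_nonneg
      (add_nonneg (Finset.sum_nonneg fun i _ => (hc i).le) hd.le))

lemma prod_pow_mul_dirichletWeight {k : ℕ} (c : Fin k → ℝ) (d : ℝ) (m : Fin k → ℕ)
    {u : Fin k → ℝ} (hu : u ∈ simplexE k) :
    (∏ i, u i ^ m i) * dirichletWeight c d u = dirichletWeight (fun i => c i + m i) d u := by
  have hpow : ∀ i, u i ^ m i * u i ^ (c i - 1) = u i ^ (c i + m i - 1) := fun i => by
    rw [← Real.rpow_natCast, ← Real.rpow_add (hu.1 i)]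
    ring_nf
  simp only [dirichletWeight, ← mul_assoc, ← Finset.prod_mul_distrib, hpow]

lemma prod_pow_mul_dirichletDensity {k : ℕ} (b : Fin k → ℝ) (β : ℝ) (m : Fin k → ℕ)
    {u : Fin k → ℝ} (hu : u ∈ simplexE k) :
    (∏ i, u i ^ m i) * dirichletDensity k b β u =
      Real.Gamma (∑ i, b i + β) / ((∏ i, Real.Gamma (b i)) * Real.Gamma β) *
        dirichletWeight (fun i => b i + m i) β u := by
  rw [← prod_pow_mul_dirichletWeight b β m hu, dirichletDensity, dirichletWeight]
  ring

lemma integrableOn_prod_pow_mul_dirichletDensity {k : ℕ} {b : Fin k → ℝ} (hb : ∀ i, 0 < b i)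
    {β : ℝ} (hβ : 0 < β) (m : Fin k → ℕ) :
    IntegrableOn (fun u => (∏ i, u i ^ m i) * dirichletDensity k b β u) (simplexE k) :=
  IntegrableOn.congr_fun
    ((integrableOn_dirichletWeight (fun i => by have := hb i; positivity) hβ).const_mul _)
    (fun _ hu => (prod_pow_mul_dirichletDensity b β m hu).symm) (measurableSet_simplexE k)

lemma integral_prod_pow_mul_dirichletDensity {k : ℕ} {b : Fin k → ℝ} (hb : ∀ i, 0 < b i)
    {β : ℝ} (hβ : 0 < β) (m : Fin k → ℕ) :
    ∫ u in simplexE k, (∏ i, u i ^ m i) * dirichletDensity k b β u =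
      (∏ i, risingFactorial (b i) (m i)) / risingFactorial (∑ i, b i + β) (∑ i, m i) := by
  have hS : 0 < ∑ i, b i + β :=
    add_pos_of_nonneg_of_pos (Finset.sum_nonneg fun i _ => (hb i).le) hβ
  have hsum : ∑ i, (b i + m i) + β = (∑ i, b i + β) + ((∑ i, m i : ℕ) : ℝ) := by
    rw [Finset.sum_add_distrib]; push_cast; ring
  rw [setIntegral_congr_fun (measurableSet_simplexE k)
      fun _ hu => prod_pow_mul_dirichletDensity b β m hu, integral_const_mul,
    integral_dirichletWeight (fun i => by have := hb i; positivity) hβ, hsum,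
    Real.Gamma_add_natCast_eq_mul_risingFactorial hS]
  simp only [Real.Gamma_add_natCast_eq_mul_risingFactorial (hb _), Finset.prod_mul_distrib]
  have := Real.Gamma_pos_of_pos hS
  have := Real.Gamma_pos_of_pos hβ
  have := risingFactorial_pos hS (∑ i, m i)
  have : 0 < ∏ i, Real.Gamma (b i) := Finset.prod_pos fun i _ => Real.Gamma_pos_of_pos (hb i)
  field_simp

noncomputable def laguerreCoeff (n : ℕ) (α : ℝ) (m : ℕ) : ℝ :=
  risingFactorial (α + 1) n * risingFactorial (-(n : ℝ)) m /
    ((n.factorial : ℝ) * risingFactorial (α + 1) m * (m.factorial : ℝ))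

lemma laguerreP_eq_sum (n : ℕ) (α y : ℝ) :
    laguerreP n α y = ∑ m ∈ Finset.range (n + 1), laguerreCoeff n α m * y ^ m := by
  rw [laguerreP, Finset.mul_sum]
  refine Finset.sum_congr rfl fun m _ => ?_
  rw [laguerreCoeff]
  ring

lemma prod_laguerreP_mul_eq_sum {k : ℕ} (n : Fin k → ℕ) (α x u : Fin k → ℝ) :
    ∏ j, laguerreP (n j) (α j) (x j * u j) =
      ∑ m ∈ Fintype.piFinset (fun i => Finset.range (n i + 1)),
        (∏ j, laguerreCoeff (n j) (α j) (m j) * x j ^ m j) * ∏ j, u j ^ m j := by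
  simp_rw [laguerreP_eq_sum, mul_pow]
  rw [Finset.prod_univ_sum]
  refine Finset.sum_congr rfl fun m _ => ?_
  rw [← Finset.prod_mul_distrib]
  simp only [mul_assoc]

theorem mvLaguerre_eq_integral_general (k : ℕ) (α : Fin k → ℝ) (hα : ∀ i, -1 < α i)
    (β : ℝ) (hβ : -1 < β) (n : Fin k → ℕ) (x : Fin k → ℝ) :
    mvLaguerre k (∑ i, α i + β + k) n x =
      risingFactorial (∑ i, α i + β + k + 1) (∑ i, n i) /
          (∏ i, risingFactorial (α i + 1) (n i)) *
        ∫ u in simplexE k, (∏ j, laguerreP (n j) (α j) (x j * u j)) *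
          dirichletDensity k (fun i => α i + 1) (β + 1) u := by
  have hα1 : ∀ i, 0 < α i + 1 := fun i => by linarith [hα i]
  have hβ1 : 0 < β + 1 := by linarith
  have hA : ∑ i, (α i + 1) + (β + 1) = ∑ i, α i + β + k + 1 := by
    rw [Finset.sum_add_distrib, Finset.sum_const, Finset.card_univ, Fintype.card_fin, nsmul_eq_mul,
      mul_one]
    ring
  simp_rw [prod_laguerreP_mul_eq_sum, Finset.sum_mul, mul_assoc]
  rw [integral_finsetSum _ fun m _ =>
      (integrableOn_prod_pow_mul_dirichletDensity hα1 hβ1 m).const_mul _,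
    mvLaguerre, Finset.mul_sum, Finset.mul_sum]
  refine Finset.sum_congr rfl fun m _ => ?_
  rw [integral_const_mul, integral_prod_pow_mul_dirichletDensity hα1 hβ1 m, hA]
  simp only [laguerreCoeff, Finset.prod_mul_distrib, Finset.prod_div_distrib]
  have : 0 < ∏ i, risingFactorial (α i + 1) (n i) :=
    Finset.prod_pos fun i _ => risingFactorial_pos (hα1 i) _
  have : 0 < ∏ i, risingFactorial (α i + 1) (m i) :=
    Finset.prod_pos fun i _ => risingFactorial_pos (hα1 i) _
  field_simp

/-- The Srivastava–Niukkanen integral representation for Erdélyi's multivariate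
Laguerre polynomials. -/
theorem mvLaguerre_eq_integral (k : ℕ) (hk : 1 ≤ k) (α : Fin k → ℝ) (hα : ∀ i, -1 < α i)
    (β : ℝ) (hβ : -1 < β) (n : Fin k → ℕ) (x : Fin k → ℝ) :
    mvLaguerre k (∑ i, α i + β + k) n x =
      risingFactorial (∑ i, α i + β + k + 1) (∑ i, n i) /
          (∏ i, risingFactorial (α i + 1) (n i)) *
        ∫ u in simplexE k, (∏ j, laguerreP (n j) (α j) (x j * u j)) *
          dirichletDensity k (fun i => α i + 1) (β + 1) u :=
  mvLaguerre_eq_integral_general k α hα β hβ n x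
end

section
/- (Panda's reduction identity.) Let $k \geq 1$, $a_1,\dots,a_k > 0$, $x \geq 0$, and let $C : \mathbb{Z}_{\geq 0} \to \mathbb{R}$ be a sequence such that the single series $\sum_{j=0}^{\infty} |C(j)|\,(a_1+\cdots+a_k)_j\, x^j/j!$ converges. Then $\sum_{j_1=0}^{\infty}\cdots\sum_{j_k=0}^{\infty} C(j_1+\cdots+j_k)\,(a_1)_{j_1}\cdots(a_k)_{j_k}\,\dfrac{x^{j_1+\cdots+j_k}}{j_1!\cdots j_k!} = \sum_{j=0}^{\infty} C(j)\,(a_1+\cdots+a_k)_j\,\dfrac{x^j}{j!}$, where the multiple series on the left converges absolutely. -/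
/-!
Write `(a)_m / m!` as the multiset coefficient `multichoose a m`. The Chu–Vandermonde identity
for `choose`, read at negative arguments, gives
`multichoose (b + c) n = ∑_{p + q = n} multichoose b p * multichoose c q`, and iterating it gives
`∑_{j₁ + ⋯ + j_k = n} ∏ (a_i)_{j_i} / j_i! = (a₁ + ⋯ + a_k)_n / n!`. Grouping the multiple series
by total degree `n` thus turns it term by term into the single series. For `a_i > 0` and `x ≥ 0`
all factors other than `C` are nonnegative, so the same grouping applied to `|C|` gives absolute
convergence, which justifies the regrouping.
-/

open scoped BigOperators
open MeasureTheory

open Finset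

theorem Ring.multichoose_add {R : Type*} [CommRing R] [BinomialRing R] (r s : R) (n : ℕ) :
    multichoose (r + s) n = ∑ p ∈ antidiagonal n, multichoose r p.1 * multichoose s p.2 := by
  have multichoose_eq_negOnePow_smul_choose (t : R) (m : ℕ) :
      multichoose t m = Int.negOnePow m • choose (-t) m := by
    rw [choose_neg', smul_smul, ← Int.negOnePow_add, ← two_mul, Int.negOnePow_two_mul, one_smul]
  rw [multichoose_eq_negOnePow_smul_choose, neg_add, add_choose_eq n (Commute.all _ _), smul_sum]
  refine sum_congr rfl fun p hp => ?_
  rw [multichoose_eq_negOnePow_smul_choose, multichoose_eq_negOnePow_smul_choose,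
    smul_mul_smul_comm, ← Int.negOnePow_add, ← Nat.cast_add, mem_antidiagonal.mp hp]

theorem Finset.sum_piAntidiag_prod_eq_of_add {ι M R : Type*} [DecidableEq ι] [AddCommMonoid M]
    [CommSemiring R] (P : M → ℕ → R) (hzero : ∀ n, P 0 n = if n = 0 then 1 else 0)
    (hadd : ∀ r s n, P (r + s) n = ∑ p ∈ antidiagonal n, P r p.1 * P s p.2)
    (a : ι → M) (s : Finset ι) (n : ℕ) :
    ∑ j ∈ s.piAntidiag n, ∏ i ∈ s, P (a i) (j i) = P (∑ i ∈ s, a i) n := by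
  induction s using Finset.cons_induction generalizing n with
  | empty => rw [piAntidiag_empty, sum_empty, hzero]; split_ifs <;> simp
  | cons i s hi ih =>
    rw [piAntidiag_cons hi, sum_disjiUnion, sum_cons, hadd]
    refine sum_congr rfl fun p _ => ?_
    rw [sum_map, ← ih, mul_sum]
    refine sum_congr rfl fun j hj => ?_
    have hji : j i = 0 := by
      by_contra h
      exact hi ((mem_piAntidiag.mp hj).2 i h)
    have hne : ∀ t ∈ s, t ≠ i := fun t ht h => hi (h ▸ ht)
    simp (disch := assumption) [hji, hne]

theorem risingFactorial_div_factorial (r : ℝ) (n : ℕ) :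
    risingFactorial r n / n.factorial = Ring.multichoose r n := by
  rw [div_eq_iff (by positivity), risingFactorial, ← Polynomial.ascPochhammer_smeval_eq_eval,
    ← Ring.factorial_nsmul_multichoose_eq_ascPochhammer, nsmul_eq_mul, mul_comm]

theorem sum_antidiagonalTuple_prod_risingFactorial_div {k : ℕ} (a : Fin k → ℝ) (n : ℕ) :
    ∑ j ∈ Nat.antidiagonalTuple k n,
        (∏ i, risingFactorial (a i) (j i)) / ∏ i, ((j i).factorial : ℝ) =
      risingFactorial (∑ i, a i) n / n.factorial := by
  simp_rw [← prod_div_distrib, risingFactorial_div_factorial,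
    ← piAntidiag_univ_fin_eq_antidiagonalTuple]
  refine sum_piAntidiag_prod_eq_of_add _ (fun m => ?_) Ring.multichoose_add a univ n
  cases m <;> simp [Ring.multichoose_zero_succ]

theorem sum_antidiagonalTuple_mul_prod_risingFactorial_mul_pow_div {k : ℕ} (D : ℕ → ℝ)
    (a : Fin k → ℝ) (x : ℝ) (n : ℕ) :
    ∑ j ∈ Nat.antidiagonalTuple k n,
        D (∑ i, j i) * (∏ i, risingFactorial (a i) (j i)) * x ^ (∑ i, j i) /
          ∏ i, ((j i).factorial : ℝ) =
      D n * risingFactorial (∑ i, a i) n * x ^ n / n.factorial := by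
  calc _ = ∑ j ∈ Nat.antidiagonalTuple k n, D n * x ^ n *
          ((∏ i, risingFactorial (a i) (j i)) / ∏ i, ((j i).factorial : ℝ)) := by
        refine sum_congr rfl fun j hj => ?_
        rw [Nat.mem_antidiagonalTuple.mp hj]
        ring
    _ = _ := by
        rw [← mul_sum, sum_antidiagonalTuple_prod_risingFactorial_div]
        ring

theorem HasSum.sum_antidiagonalTuple {α : Type*} [AddCommMonoid α] [TopologicalSpace α]
    [ContinuousAdd α] [RegularSpace α] {k : ℕ} {f : (Fin k → ℕ) → α} {s : α}
    (hf : HasSum f s) : HasSum (fun n => ∑ j ∈ Nat.antidiagonalTuple k n, f j) s :=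
  ((Nat.sigmaAntidiagonalTupleEquivTuple k).hasSum_iff.mpr hf).sigma fun n =>
    (Nat.antidiagonalTuple k n).hasSum f

theorem summable_of_summable_sum_antidiagonalTuple {k : ℕ} {f : (Fin k → ℕ) → ℝ} (hf : 0 ≤ f)
    (h : Summable fun n => ∑ j ∈ Nat.antidiagonalTuple k n, f j) : Summable f := by
  refine (Nat.sigmaAntidiagonalTupleEquivTuple k).summable_iff.mp
    ((summable_sigma_of_nonneg fun _ => hf _).mpr ⟨fun n => .of_finite, h.congr fun n => ?_⟩)
  exact (Finset.tsum_subtype _ f).symm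

theorem abs_mul_prod_risingFactorial_mul_pow_div {k : ℕ} (c : ℝ) {a : Fin k → ℝ}
    (ha : ∀ i, 0 < a i) {x : ℝ} (hx : 0 ≤ x) (j : Fin k → ℕ) :
    |c * (∏ i, risingFactorial (a i) (j i)) * x ^ (∑ i, j i) / ∏ i, ((j i).factorial : ℝ)| =
      |c| * (∏ i, risingFactorial (a i) (j i)) * x ^ (∑ i, j i) /
        ∏ i, ((j i).factorial : ℝ) := by
  have hprod : 0 ≤ ∏ i, risingFactorial (a i) (j i) :=
    prod_nonneg fun i _ => (ascPochhammer_pos _ _ (ha i)).le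
  have hfact : 0 ≤ ∏ i, ((j i).factorial : ℝ) := by positivity
  rw [abs_div, abs_mul, abs_mul, abs_of_nonneg hprod, abs_of_nonneg (pow_nonneg hx _),
    abs_of_nonneg hfact]

theorem panda_reduction_general (k : ℕ) (a : Fin k → ℝ) (ha : ∀ i, 0 < a i)
    (x : ℝ) (hx : 0 ≤ x) (C : ℕ → ℝ)
    (hC : Summable fun j : ℕ =>
      |C j| * risingFactorial (∑ i, a i) j * x ^ j / (Nat.factorial j : ℝ)) :
    (Summable fun j : Fin k → ℕ =>
        |C (∑ i, j i) * (∏ i, risingFactorial (a i) (j i)) * x ^ (∑ i, j i) /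
          ∏ i, (Nat.factorial (j i) : ℝ)|) ∧
      ∑' j : Fin k → ℕ, C (∑ i, j i) * (∏ i, risingFactorial (a i) (j i)) *
          x ^ (∑ i, j i) / ∏ i, (Nat.factorial (j i) : ℝ) =
        ∑' j : ℕ, C j * risingFactorial (∑ i, a i) j * x ^ j / (Nat.factorial j : ℝ) := by
  have hsummable : Summable fun j : Fin k → ℕ =>
      |C (∑ i, j i) * (∏ i, risingFactorial (a i) (j i)) * x ^ (∑ i, j i) /
        ∏ i, (Nat.factorial (j i) : ℝ)| := by
    refine summable_of_summable_sum_antidiagonalTuple (fun _ => abs_nonneg _) ?_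
    simp only [abs_mul_prod_risingFactorial_mul_pow_div _ ha hx]
    exact hC.congr fun n =>
      (sum_antidiagonalTuple_mul_prod_risingFactorial_mul_pow_div (fun m => |C m|) a x n).symm
  refine ⟨hsummable, ?_⟩
  have hgrouped := (summable_abs_iff.mp hsummable).hasSum.sum_antidiagonalTuple
  simp only [sum_antidiagonalTuple_mul_prod_risingFactorial_mul_pow_div] at hgrouped
  exact hgrouped.tsum_eq.symm

/-- Panda's reduction identity for multiple series. -/
theorem panda_reduction (k : ℕ) (hk : 1 ≤ k) (a : Fin k → ℝ) (ha : ∀ i, 0 < a i)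
    (x : ℝ) (hx : 0 ≤ x) (C : ℕ → ℝ)
    (hC : Summable fun j : ℕ =>
      |C j| * risingFactorial (∑ i, a i) j * x ^ j / (Nat.factorial j : ℝ)) :
    (Summable fun j : Fin k → ℕ =>
        |C (∑ i, j i) * (∏ i, risingFactorial (a i) (j i)) * x ^ (∑ i, j i) /
          ∏ i, (Nat.factorial (j i) : ℝ)|) ∧
      ∑' j : Fin k → ℕ, C (∑ i, j i) * (∏ i, risingFactorial (a i) (j i)) *
          x ^ (∑ i, j i) / ∏ i, (Nat.factorial (j i) : ℝ) =
        ∑' j : ℕ, C j * risingFactorial (∑ i, a i) j * x ^ j / (Nat.factorial j : ℝ) :=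
  panda_reduction_general k a ha x hx C hC
end

section
/- (Szegő's inequality.) Let $\alpha \geq 0$, $x \geq 0$, and $n \in \mathbb{Z}_{\geq 0}$. Then $\left|L_n^{(\alpha)}(x)\right| \leq \dfrac{(\alpha+1)_n}{n!}\, e^{x/2}$. -/
open scoped BigOperators
open MeasureTheory

namespace SzegoAux

open Finset Polynomial Filter Real Topology

lemma rf_zero (a : ℝ) : risingFactorial a 0 = 1 := by
  simp [risingFactorial]

lemma rf_succ (a : ℝ) (m : ℕ) :
    risingFactorial a (m + 1) = risingFactorial a m * (a + m) := by
  simp [risingFactorial, ascPochhammer_succ_right]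

lemma rf_succ_left (a : ℝ) (m : ℕ) :
    risingFactorial a (m + 1) = a * risingFactorial (a + 1) m := by
  simp [risingFactorial, ascPochhammer_succ_left]

lemma rf_pos {a : ℝ} (ha : 0 < a) (m : ℕ) : 0 < risingFactorial a m := by
  induction m with
  | zero => simp [rf_zero]
  | succ k ih => rw [rf_succ]; positivity

lemma rf_nonneg {a : ℝ} (ha : 0 ≤ a) (m : ℕ) : 0 ≤ risingFactorial a m := by
  cases m with
  | zero => simp [rf_zero]
  | succ k => rw [rf_succ_left]; exact mul_nonneg ha (rf_pos (by linarith) k).le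

lemma rf_one (n : ℕ) : risingFactorial 1 n = n.factorial := by
  induction n with
  | zero => simp [rf_zero]
  | succ k ih => rw [rf_succ, ih, Nat.factorial_succ]; push_cast; ring

lemma rf_neg_nat (n : ℕ) : ∀ j ≤ n,
    risingFactorial (-(n : ℝ)) j = (-1) ^ j * (n.descFactorial j : ℝ) := by
  intro j hj
  induction j with
  | zero => simp [rf_zero]
  | succ k ih =>
    have hk : k ≤ n := Nat.le_of_succ_le hj
    rw [rf_succ, ih hk]
    have h1 : n.descFactorial (k+1) = (n - k) * n.descFactorial k :=
      Nat.descFactorial_succ n k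
    rw [h1]
    have hnk : (↑(n - k) : ℝ) = (n : ℝ) - k := by
      push_cast [Nat.cast_sub hk]; ring
    push_cast [hnk]
    ring

lemma coeff_linear_pow (a b : ℝ) (N k : ℕ) (hk : k ≤ N) :
    ((C a + C b * X : ℝ[X]) ^ N).coeff k = (N.choose k : ℝ) * a ^ (N - k) * b ^ k := by
  rw [add_pow]
  have hterm : ∀ i, (C a) ^ i * (C b * X) ^ (N - i) * (N.choose i : ℝ[X])
      = C (a ^ i * b ^ (N - i) * (N.choose i : ℝ)) * X ^ (N - i) := by
    intro i
    rw [mul_pow, ← C_pow, ← C_pow, ← C_eq_natCast, C_mul, C_mul]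
    ring
  rw [finset_sum_coeff]
  have hco : ∀ i, (C (a ^ i * b ^ (N - i) * (N.choose i : ℝ)) * X ^ (N - i)).coeff k
      = if N - i = k then a ^ i * b ^ (N - i) * (N.choose i : ℝ) else 0 := by
    intro i
    rw [coeff_C_mul, coeff_X_pow]
    by_cases hcase : N - i = k
    · rw [if_pos hcase, if_pos hcase.symm, mul_one]
    · rw [if_neg hcase, if_neg (Ne.symm hcase), mul_zero]
  calc ∑ i ∈ range (N+1), ((C a) ^ i * (C b * X) ^ (N - i) * (N.choose i : ℝ[X])).coeff k
      = ∑ i ∈ range (N+1), if N - i = k then a ^ i * b ^ (N - i) * (N.choose i : ℝ) else 0 := by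
        refine Finset.sum_congr rfl fun i _ => ?_
        rw [hterm i, hco i]
    _ = (N.choose k : ℝ) * a ^ (N - k) * b ^ k := by
        rw [Finset.sum_eq_single (N - k)]
        · have h1 : N - (N - k) = k := by omega
          rw [if_pos h1, h1, Nat.choose_symm hk]
          ring
        · intro i hi hne
          have : N - i ≠ k := by
            simp only [mem_range] at hi; omega
          rw [if_neg this]
        · intro h
          exact absurd (mem_range.mpr (by omega)) h

lemma poly_ext {M : ℕ} (f g : ℕ → ℝ)
    (h : ∀ u : ℝ, ∑ i ∈ range M, f i * u ^ i = ∑ i ∈ range M, g i * u ^ i) :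
    ∀ i ∈ range M, f i = g i := by
  have hpq : (∑ i ∈ range M, C (f i) * X ^ i : ℝ[X]) = ∑ i ∈ range M, C (g i) * X ^ i := by
    apply Polynomial.funext
    intro u
    simpa [eval_finset_sum] using h u
  intro i hi
  have := congrArg (fun p : ℝ[X] => p.coeff i) hpq
  simpa [finset_sum_coeff, coeff_C_mul, coeff_X_pow, Finset.sum_ite_eq' (range M),
    hi] using this

theorem row_norm (N n : ℕ) (hn : n ∈ range (N+1)) (c s : ℝ) (h1 : c^2 + s^2 = 1) :
    ∑ k ∈ range (N+1),
        (((C c + C s * X) ^ (N-n) * (C c * X - C s) ^ n : ℝ[X]).coeff k)^2 / (N.choose k : ℝ)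
      = 1 / (N.choose n : ℝ) := by
  set P : ℕ → ℝ[X] := fun m => (C c + C s * X) ^ (N-m) * (C c * X - C s) ^ m with hP
  set S : ℕ → ℕ → ℝ :=
    fun m m' => ∑ k ∈ range (N+1), (P m).coeff k * (P m').coeff k / (N.choose k : ℝ) with hS
  -- Step 1: generating polynomial
  have hQ : ∀ u : ℝ, ((C (c - u*s) + C (s + u*c) * X : ℝ[X])) ^ N
      = ∑ m ∈ range (N+1), C ((N.choose m : ℝ) * u^m) * P m := by
    intro u
    have hsplit : (C (c - u*s) + C (s + u*c) * X : ℝ[X])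
        = C u * (C c * X - C s) + (C c + C s * X) := by
      rw [C_sub, C_add, C_mul, C_mul]
      ring
    rw [hsplit, add_pow]
    refine Finset.sum_congr rfl fun m hm => ?_
    have hmn : m ≤ N := Nat.lt_succ_iff.mp (mem_range.mp hm)
    have hexp : (C u * (C c * X - C s)) ^ m * (C c + C s * X) ^ (N - m) * (N.choose m : ℝ[X])
        = (C (u^m) * (C c * X - C s) ^ m) * (C c + C s * X) ^ (N - m) * C ((N.choose m : ℝ)) := by
      rw [mul_pow, ← C_pow, ← C_eq_natCast]
    rw [hexp, C_mul]
    ring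
  -- Step 2: coefficients of the generating polynomial, two ways
  have hcoeff2 : ∀ (u : ℝ) (k : ℕ), k ∈ range (N+1) →
      (((C (c - u*s) + C (s + u*c) * X : ℝ[X])) ^ N).coeff k
      = ∑ m ∈ range (N+1), ((N.choose m : ℝ) * u^m) * (P m).coeff k := by
    intro u k _
    rw [hQ u, finset_sum_coeff]
    exact Finset.sum_congr rfl fun m _ => by rw [coeff_C_mul]
  have hcoeff1 : ∀ (u : ℝ) (k : ℕ), k ∈ range (N+1) →
      (((C (c - u*s) + C (s + u*c) * X : ℝ[X])) ^ N).coeff k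
      = (N.choose k : ℝ) * (c - u*s) ^ (N - k) * (s + u*c) ^ k := by
    intro u k hk
    exact coeff_linear_pow _ _ _ _ (Nat.lt_succ_iff.mp (mem_range.mp hk))
  -- Step 3: T computed via closed form
  have T1 : ∀ u v : ℝ,
      ∑ k ∈ range (N+1),
        (((C (c - u*s) + C (s + u*c) * X : ℝ[X])) ^ N).coeff k *
        (((C (c - v*s) + C (s + v*c) * X : ℝ[X])) ^ N).coeff k / (N.choose k : ℝ)
      = (1 + u*v)^N := by
    intro u v
    have key : ∀ k ∈ range (N+1),
        (((C (c - u*s) + C (s + u*c) * X : ℝ[X])) ^ N).coeff k *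
        (((C (c - v*s) + C (s + v*c) * X : ℝ[X])) ^ N).coeff k / (N.choose k : ℝ)
        = ((s + u*c)*(s + v*c))^k * ((c - u*s)*(c - v*s))^(N-k) * (N.choose k : ℝ) := by
      intro k hk
      rw [hcoeff1 u k hk, hcoeff1 v k hk, mul_pow (s + u*c) (s + v*c),
        mul_pow (c - u*s) (c - v*s)]
      have hch : (N.choose k : ℝ) ≠ 0 := by
        have := Nat.choose_pos (Nat.lt_succ_iff.mp (mem_range.mp hk))
        positivity
      field_simp
    rw [Finset.sum_congr rfl key, ← add_pow]
    have : (s + u*c)*(s + v*c) + (c - u*s)*(c - v*s) = 1 + u*v := by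
      linear_combination (1 + u*v) * h1
    rw [this]
  -- Step 4: T computed via S
  have T2 : ∀ u v : ℝ,
      ∑ k ∈ range (N+1),
        (((C (c - u*s) + C (s + u*c) * X : ℝ[X])) ^ N).coeff k *
        (((C (c - v*s) + C (s + v*c) * X : ℝ[X])) ^ N).coeff k / (N.choose k : ℝ)
      = ∑ m ∈ range (N+1),
          ((N.choose m : ℝ) * ∑ m' ∈ range (N+1), ((N.choose m' : ℝ) * S m m') * v^m') * u^m := by
    intro u v
    calc ∑ k ∈ range (N+1),
        (((C (c - u*s) + C (s + u*c) * X : ℝ[X])) ^ N).coeff k *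
        (((C (c - v*s) + C (s + v*c) * X : ℝ[X])) ^ N).coeff k / (N.choose k : ℝ)
        = ∑ k ∈ range (N+1), ∑ m ∈ range (N+1), ∑ m' ∈ range (N+1),
            (((N.choose m : ℝ) * u^m) * (P m).coeff k) *
            (((N.choose m' : ℝ) * v^m') * (P m').coeff k) / (N.choose k : ℝ) := by
          refine Finset.sum_congr rfl fun k hk => ?_
          rw [hcoeff2 u k hk, hcoeff2 v k hk, Finset.sum_mul_sum, Finset.sum_div]
          exact Finset.sum_congr rfl fun m _ => Finset.sum_div _ _ _
      _ = ∑ m ∈ range (N+1), ∑ m' ∈ range (N+1), ∑ k ∈ range (N+1),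
            (((N.choose m : ℝ) * u^m) * (P m).coeff k) *
            (((N.choose m' : ℝ) * v^m') * (P m').coeff k) / (N.choose k : ℝ) := by
          rw [Finset.sum_comm]
          exact Finset.sum_congr rfl fun m _ => Finset.sum_comm
      _ = ∑ m ∈ range (N+1),
          ((N.choose m : ℝ) * ∑ m' ∈ range (N+1), ((N.choose m' : ℝ) * S m m') * v^m') * u^m := by
          refine Finset.sum_congr rfl fun m _ => ?_
          rw [Finset.mul_sum, Finset.sum_mul]
          refine Finset.sum_congr rfl fun m' _ => ?_
          simp only [hS]
          calc ∑ k ∈ range (N+1),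
              ((N.choose m : ℝ) * u^m) * (P m).coeff k *
                (((N.choose m' : ℝ) * v^m') * (P m').coeff k) / (N.choose k : ℝ)
              = ((N.choose m : ℝ) * u^m * ((N.choose m' : ℝ) * v^m')) *
                  ∑ k ∈ range (N+1), (P m).coeff k * (P m').coeff k / (N.choose k : ℝ) := by
                rw [Finset.mul_sum]
                exact Finset.sum_congr rfl fun k _ => by ring
            _ = (N.choose m : ℝ) *
                  ((N.choose m' : ℝ) *
                    (∑ k ∈ range (N+1), (P m).coeff k * (P m').coeff k / (N.choose k : ℝ)) * v^m')
                  * u^m := by ring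
  -- Step 5: extraction
  have hext1 : ∀ v : ℝ, ∀ m ∈ range (N+1),
      (N.choose m : ℝ) * ∑ m' ∈ range (N+1), ((N.choose m' : ℝ) * S m m') * v^m'
      = (N.choose m : ℝ) * v^m := by
    intro v
    apply poly_ext
    intro u
    rw [← T2 u v, T1 u v, add_comm (1:ℝ) (u*v), add_pow]
    refine Finset.sum_congr rfl fun m _ => ?_
    rw [mul_pow, one_pow]
    ring
  have hnN : n ≤ N := Nat.lt_succ_iff.mp (mem_range.mp hn)
  have hchn : (N.choose n : ℝ) ≠ 0 := by
    have := Nat.choose_pos hnN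
    positivity
  have hext2 : ∀ m' ∈ range (N+1), (N.choose m' : ℝ) * S n m'
      = (if m' = n then (1:ℝ) else 0) := by
    apply poly_ext
    intro v
    have h5 := hext1 v n hn
    have h6 : ∑ m' ∈ range (N+1), ((N.choose m' : ℝ) * S n m') * v^m' = v^n :=
      mul_left_cancel₀ hchn h5
    rw [h6]
    rw [Finset.sum_congr rfl (fun m' _ => ?_)]
    · rw [Finset.sum_ite_eq' (range (N+1)) n (fun m' => v^m'), if_pos hn]
    · rw [ite_mul, one_mul, zero_mul]
  have := hext2 n hn
  rw [if_pos rfl] at this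
  have hSnn : S n n = 1 / (N.choose n : ℝ) := by
    field_simp at this ⊢
    linarith [this]
  rw [← hSnn, hS]
  simp only [hP, sq]

lemma diag_coeff_formula (N n : ℕ) (hn : 2*n ≤ N) (c s : ℝ) :
    ((C c + C s * X) ^ (N-n) * (C c * X - C s) ^ n : ℝ[X]).coeff n
      = ∑ k ∈ range (n+1),
          (n.choose k : ℝ) * ((N-n).choose k : ℝ) * (-1)^k * s^(2*k) * c^(N-2*k) := by
  rw [coeff_mul, Finset.Nat.sum_antidiagonal_eq_sum_range_succ_mk]
  refine Finset.sum_congr rfl fun k hk => ?_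
  have hkn : k ≤ n := Nat.lt_succ_iff.mp (mem_range.mp hk)
  have hD : (C c * X - C s : ℝ[X]) = C (-s) + C c * X := by
    rw [C_neg]; ring
  rw [hD, coeff_linear_pow c s (N-n) k (by omega),
    coeff_linear_pow (-s) c n (n-k) (by omega)]
  have e0 : n - (n - k) = k := by omega
  rw [e0, Nat.choose_symm hkn, neg_pow]
  have e1 : s^(2*k) = s^k * s^k := by rw [two_mul, pow_add]
  have e2 : c^(N-2*k) = c^(N-n-k) * c^(n-k) := by
    rw [← pow_add]
    congr 1
    omega
  rw [e1, e2]
  ring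

lemma diag_coeff_bound (N n : ℕ) (hn : 2*n ≤ N) (c s : ℝ) (h1 : c^2 + s^2 = 1) :
    |∑ k ∈ range (n+1),
        (n.choose k : ℝ) * ((N-n).choose k : ℝ) * (-1)^k * s^(2*k) * c^(N-2*k)| ≤ 1 := by
  rw [← diag_coeff_formula N n hn c s]
  set a : ℝ := ((C c + C s * X) ^ (N-n) * (C c * X - C s) ^ n : ℝ[X]).coeff n with ha
  have hmem : n ∈ range (N+1) := mem_range.mpr (by omega)
  have hrow := row_norm N n hmem c s h1
  have hterm : a^2 / (N.choose n : ℝ) ≤ 1 / (N.choose n : ℝ) := by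
    rw [← hrow]
    refine Finset.single_le_sum
      (f := fun k => (((C c + C s * X) ^ (N-n) * (C c * X - C s) ^ n : ℝ[X]).coeff k)^2
        / (N.choose k : ℝ)) (fun k hk => ?_) hmem
    have : (0:ℝ) < (N.choose k : ℝ) := by
      exact_mod_cast Nat.choose_pos (Nat.lt_succ_iff.mp (mem_range.mp hk))
    positivity
  have hpos : (0:ℝ) < (N.choose n : ℝ) := by
    exact_mod_cast Nat.choose_pos (by omega : n ≤ N)
  have hsq : a^2 ≤ 1 := by
    have h2 := (div_le_div_iff₀ hpos hpos).mp hterm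
    have := le_of_mul_le_mul_right (by linarith : a^2 * (N.choose n : ℝ) ≤ 1 * (N.choose n : ℝ)) hpos
    linarith
  exact abs_le_one_iff_mul_self_le_one.mpr (by nlinarith [abs_nonneg a, sq_abs a])

lemma inv_twoM_tendsto (a : ℝ) :
    Tendsto (fun M : ℕ => a / (2*(M:ℝ))) atTop (𝓝 0) := by
  have h2 : Tendsto (fun M : ℕ => 2*(M:ℝ)) atTop atTop :=
    (tendsto_natCast_atTop_atTop (R := ℝ)).const_mul_atTop (by norm_num)
  exact Tendsto.div_atTop tendsto_const_nhds h2

lemma choose_div_pow_tendsto (n k : ℕ) :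
    Tendsto (fun M : ℕ => ((2*M - n).choose k : ℝ) / (2*(M:ℝ))^k) atTop
      (𝓝 (1 / (k.factorial : ℝ))) := by
  have hfac : (k.factorial : ℝ) ≠ 0 := Nat.cast_ne_zero.mpr k.factorial_ne_zero
  have hev : ∀ᶠ M : ℕ in atTop,
      (1 / (k.factorial : ℝ)) * ∏ i ∈ range k, (1 - ((n:ℝ) + i)/(2*(M:ℝ)))
        = ((2*M - n).choose k : ℝ) / (2*(M:ℝ))^k := by
    filter_upwards [eventually_ge_atTop (n + k + 1)] with M hM
    have h2M : (0:ℝ) < 2*(M:ℝ) := by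
      have : (0:ℝ) < (M:ℝ) := by exact_mod_cast (by omega : 0 < M)
      linarith
    have hprod : ∏ i ∈ range k, ((2*(M:ℝ)) - n - i)
        = (2*(M:ℝ))^k * ∏ i ∈ range k, (1 - ((n:ℝ)+i)/(2*(M:ℝ))) := by
      calc ∏ i ∈ range k, ((2*(M:ℝ)) - n - i)
          = ∏ i ∈ range k, ((2*(M:ℝ)) * (1 - ((n:ℝ)+i)/(2*(M:ℝ)))) := by
            refine Finset.prod_congr rfl fun i hi => ?_
            have hM0 : (M:ℝ) ≠ 0 := by exact_mod_cast (show M ≠ 0 by omega)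
            field_simp
            ring
        _ = (2*(M:ℝ))^k * ∏ i ∈ range k, (1 - ((n:ℝ)+i)/(2*(M:ℝ))) := by
            rw [Finset.prod_mul_distrib, Finset.prod_const, Finset.card_range]
    have hdesc : ((2*M - n).choose k : ℝ) * (k.factorial : ℝ)
        = ∏ i ∈ range k, ((2*(M:ℝ)) - n - i) := by
      have h1 : (2*M - n).descFactorial k = ∏ i ∈ range k, (2*M - n - i) :=
        Nat.descFactorial_eq_prod_range _ k
      have h2 : ((2*M - n).descFactorial k : ℝ) = ∏ i ∈ range k, ((2*(M:ℝ)) - n - i) := by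
        rw [h1, Nat.cast_prod]
        refine Finset.prod_congr rfl fun i hi => ?_
        have hik : i < k := mem_range.mp hi
        have he : (2*M : ℕ) - n - i = 2*M - (n + i) := by omega
        rw [he, Nat.cast_sub (by omega)]
        push_cast
        ring
      rw [← h2, Nat.descFactorial_eq_factorial_mul_choose]
      push_cast
      ring
    rw [← hdesc] at hprod
    have hpow : ((2*(M:ℝ))^k) ≠ 0 := by positivity
    rw [eq_div_iff hpow]
    have hq : (∏ i ∈ range k, (1 - ((n:ℝ)+i)/(2*(M:ℝ)))) * (2*(M:ℝ))^k
        = ((2*M - n).choose k : ℝ) * (k.factorial : ℝ) := by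
      linear_combination -hprod
    calc (1 / (k.factorial : ℝ)) * (∏ i ∈ range k, (1 - ((n:ℝ)+i)/(2*(M:ℝ)))) * (2*(M:ℝ))^k
        = ((∏ i ∈ range k, (1 - ((n:ℝ)+i)/(2*(M:ℝ)))) * (2*(M:ℝ))^k) / (k.factorial : ℝ) := by
          ring
      _ = (((2*M - n).choose k : ℝ) * (k.factorial : ℝ)) / (k.factorial : ℝ) := by rw [hq]
      _ = ((2*M - n).choose k : ℝ) := by field_simp
  refine Tendsto.congr' hev ?_
  have hlim : Tendsto (fun M : ℕ => ∏ i ∈ range k, (1 - ((n:ℝ) + i)/(2*(M:ℝ)))) atTop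
      (𝓝 1) := by
    have := tendsto_finset_prod (f := fun (i : ℕ) (M : ℕ) => 1 - ((n:ℝ) + i)/(2*(M:ℝ)))
      (x := atTop) (a := fun _ => (1:ℝ)) (range k)
      (fun i _ => by simpa using (inv_twoM_tendsto ((n:ℝ) + i)).const_sub 1)
    simpa using this
  simpa using (hlim.const_mul (1 / (k.factorial : ℝ)))

lemma base_pow_tendsto (x : ℝ) (k : ℕ) :
    Tendsto (fun M : ℕ => (1 - x/(2*(M:ℝ)))^(M - k)) atTop (𝓝 (Real.exp (-x/2))) := by
  have hbase : ∀ M : ℕ, 1 - x/(2*(M:ℝ)) = 1 + (-x/2)/(M:ℝ) := by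
    intro M
    rcases Nat.eq_zero_or_pos M with h0 | hpos
    · subst h0; simp
    · have : ((M:ℝ)) ≠ 0 := Nat.cast_ne_zero.mpr hpos.ne'
      field_simp
      ring
  have hnum : Tendsto (fun M : ℕ => (1 + (-x/2)/(M:ℝ))^M) atTop (𝓝 (Real.exp (-x/2))) :=
    Real.tendsto_one_add_div_pow_exp (-x/2)
  have hden : Tendsto (fun M : ℕ => (1 + (-x/2)/(M:ℝ))^k) atTop (𝓝 1) := by
    have h1 : Tendsto (fun M : ℕ => 1 + (-x/2)/(M:ℝ)) atTop (𝓝 1) := by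
      have : Tendsto (fun M : ℕ => (-x/2)/(M:ℝ)) atTop (𝓝 0) := by
        have h2 : Tendsto (fun M : ℕ => (M:ℝ)) atTop atTop := tendsto_natCast_atTop_atTop
        exact Tendsto.div_atTop tendsto_const_nhds h2
      simpa using this.const_add 1
    simpa using h1.pow k
  have hdiv : Tendsto (fun M : ℕ => (1 + (-x/2)/(M:ℝ))^M / (1 + (-x/2)/(M:ℝ))^k) atTop
      (𝓝 (Real.exp (-x/2))) := by
    have h := (hnum.div hden (by norm_num) : Tendsto (fun M : ℕ => (1 + (-x/2)/(M:ℝ))^M / (1 + (-x/2)/(M:ℝ))^k) atTop (𝓝 (Real.exp (-x/2) / 1)))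
    rwa [div_one] at h
  refine Tendsto.congr' ?_ hdiv
  filter_upwards [eventually_ge_atTop (k + Nat.ceil (|x|/2) + 1)] with M hM
  have hMk : k ≤ M := by omega
  have hMpos : (0:ℝ) < (M:ℝ) := by exact_mod_cast (by omega : 0 < M)
  have hMx : |x|/2 < (M:ℝ) := by
    calc |x|/2 ≤ (Nat.ceil (|x|/2) : ℝ) := Nat.le_ceil _
    _ < (M:ℝ) := by exact_mod_cast (by omega : Nat.ceil (|x|/2) < M)
  have hbpos : 0 < 1 + (-x/2)/(M:ℝ) := by
    have h1 : |(-x/2)/(M:ℝ)| < 1 := by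
      rw [abs_div, abs_of_pos hMpos, div_lt_one hMpos]
      have h2 : |(-x/2)| = |x|/2 := by
        rw [show (-x/2 : ℝ) = (-x)/2 by ring, abs_div, abs_neg, abs_two]
      linarith [h2]
    have := neg_abs_le ((-x/2)/(M:ℝ))
    linarith
  rw [div_eq_mul_inv, ← pow_sub₀ _ hbpos.ne' hMk, ← hbase M]

noncomputable def L0 (n : ℕ) (x : ℝ) : ℝ :=
  ∑ j ∈ Finset.range (n + 1), (-1) ^ j * (n.choose j : ℝ) * x ^ j / (Nat.factorial j : ℝ)

lemma L0_bound (n : ℕ) (x : ℝ) (hx : 0 ≤ x) : |L0 n x| ≤ Real.exp (x / 2) := by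
  set d : ℕ → ℝ := fun M => ∑ k ∈ range (n+1),
      (n.choose k : ℝ) * ((2*M - n).choose k : ℝ) * (-1)^k * (x/(2*(M:ℝ)))^k *
        (1 - x/(2*(M:ℝ)))^(M - k) with hd
  -- the limit
  have hT : Tendsto d atTop (𝓝 (Real.exp (-x/2) * L0 n x)) := by
    have hsum : Tendsto d atTop (𝓝 (∑ k ∈ range (n+1),
        ((n.choose k : ℝ) * (-1)^k * x^k) * (1/(k.factorial : ℝ) * Real.exp (-x/2)))) := by
      apply tendsto_finset_sum
      intro k _
      have htk := (choose_div_pow_tendsto n k).mul (base_pow_tendsto x k)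
      have heq : (fun M : ℕ => (n.choose k : ℝ) * ((2*M - n).choose k : ℝ) * (-1)^k *
          (x/(2*(M:ℝ)))^k * (1 - x/(2*(M:ℝ)))^(M - k))
          = fun M : ℕ => ((n.choose k : ℝ) * (-1)^k * x^k) *
            (((2*M - n).choose k : ℝ) / (2*(M:ℝ))^k * (1 - x/(2*(M:ℝ)))^(M - k)) := by
        funext M
        rw [div_pow]
        ring
      rw [heq]
      exact htk.const_mul _
    have : (∑ k ∈ range (n+1),
        ((n.choose k : ℝ) * (-1)^k * x^k) * (1/(k.factorial : ℝ) * Real.exp (-x/2)))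
        = Real.exp (-x/2) * L0 n x := by
      unfold L0
      rw [Finset.mul_sum]
      exact Finset.sum_congr rfl fun k _ => by ring
    rwa [this] at hsum
  -- the eventual bound
  have hB : ∀ᶠ M : ℕ in atTop, |d M| ≤ 1 := by
    filter_upwards [eventually_ge_atTop (n + Nat.ceil x + 1)] with M hM
    have hnM : n ≤ M := by omega
    have hMpos : (0:ℝ) < (M:ℝ) := by exact_mod_cast (by omega : 0 < M)
    have hxM : x ≤ 2*(M:ℝ) := by
      have h1 : x ≤ (Nat.ceil x : ℝ) := Nat.le_ceil x
      have h2 : (Nat.ceil x : ℝ) ≤ (M:ℝ) := by exact_mod_cast (by omega : Nat.ceil x ≤ M)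
      linarith
    have hfrac0 : 0 ≤ x/(2*(M:ℝ)) := by positivity
    have hfrac1 : 0 ≤ 1 - x/(2*(M:ℝ)) := by
      rw [sub_nonneg, div_le_one (by linarith)]
      exact hxM
    set s : ℝ := Real.sqrt (x/(2*(M:ℝ))) with hs
    set c : ℝ := Real.sqrt (1 - x/(2*(M:ℝ))) with hc
    have hs2 : s^2 = x/(2*(M:ℝ)) := Real.sq_sqrt hfrac0
    have hc2 : c^2 = 1 - x/(2*(M:ℝ)) := Real.sq_sqrt hfrac1
    have h1 : c^2 + s^2 = 1 := by rw [hs2, hc2]; ring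
    have hbd := diag_coeff_bound (2*M) n (by omega) c s h1
    have hde : d M = ∑ k ∈ range (n+1),
        (n.choose k : ℝ) * ((2*M - n).choose k : ℝ) * (-1)^k * s^(2*k) * c^(2*M-2*k) := by
      rw [hd]
      refine Finset.sum_congr rfl fun k hk => ?_
      have hkn : k ≤ n := Nat.lt_succ_iff.mp (mem_range.mp hk)
      have e1 : s^(2*k) = (x/(2*(M:ℝ)))^k := by rw [pow_mul, hs2]
      have e2 : c^(2*M-2*k) = (1 - x/(2*(M:ℝ)))^(M-k) := by
        have : 2*M - 2*k = 2*(M-k) := by omega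
        rw [this, pow_mul, hc2]
      rw [e1, e2]
    rw [hde]
    exact hbd
  have habs : |Real.exp (-x/2) * L0 n x| ≤ 1 := le_of_tendsto hT.abs hB
  rw [abs_mul, abs_of_pos (Real.exp_pos _)] at habs
  have hmul : Real.exp (x/2) * Real.exp (-x/2) = 1 := by
    rw [← Real.exp_add, show x/2 + -x/2 = 0 by ring, Real.exp_zero]
  have h2 := mul_le_mul_of_nonneg_left habs (Real.exp_pos (x/2)).le
  have h3 : Real.exp (x/2) * (Real.exp (-x/2) * |L0 n x|) = |L0 n x| := by
    rw [← mul_assoc, hmul, one_mul]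
  linarith [h2, h3]

lemma connection_sum (α : ℝ) (hα : 0 ≤ α) :
    ∀ n : ℕ, ∀ j ≤ n,
      ∑ k ∈ range (n+1),
          risingFactorial α (n-k) / ((n-k).factorial : ℝ) * (k.choose j : ℝ)
        = risingFactorial (α+1) n / (((n-j).factorial : ℝ) * risingFactorial (α+1) j) := by
  intro n
  induction n with
  | zero =>
    intro j hj
    interval_cases j
    simp [rf_zero]
  | succ n IH =>
    intro j hj
    rcases Nat.lt_or_ge j (n+1) with hjn | hjn
    · -- j ≤ n
      have hjn' : j ≤ n := Nat.lt_succ_iff.mp hjn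
      -- peel off the k = 0 term
      rw [Finset.sum_range_succ' (fun k =>
        risingFactorial α (n+1-k) / ((n+1-k).factorial : ℝ) * (k.choose j : ℝ)) (n+1)]
      have hshift : ∀ k, n + 1 - (k+1) = n - k := fun k => by omega
      rcases Nat.eq_zero_or_pos j with hj0 | hjpos
      · subst hj0
        have hsum : ∑ k ∈ range (n+1),
            risingFactorial α (n+1-(k+1)) / ((n+1-(k+1)).factorial : ℝ) * ((k+1).choose 0 : ℝ)
            = risingFactorial (α+1) n / (((n-0).factorial : ℝ) * risingFactorial (α+1) 0) := by
          rw [← IH 0 (Nat.zero_le n)]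
          exact Finset.sum_congr rfl fun k _ => by rw [hshift k]; simp
        rw [hsum]
        simp only [Nat.sub_zero, Nat.choose_zero_right, Nat.cast_one, mul_one, rf_zero]
        rw [rf_succ (α+1) n, rf_succ_left α n]
        have hnf : ((n+1).factorial : ℝ) = ((n:ℝ)+1) * n.factorial := by
          rw [Nat.factorial_succ]; push_cast; ring
        rw [hnf]
        have h1 : (n.factorial : ℝ) ≠ 0 := Nat.cast_ne_zero.mpr n.factorial_ne_zero
        have h4 : ((n:ℝ) + 1) ≠ 0 := by positivity
        field_simp
        ring
      · -- 1 ≤ j ≤ n : j = j' + 1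
        obtain ⟨j', rfl⟩ : ∃ j', j = j' + 1 := ⟨j - 1, by omega⟩
        have hsplit : ∑ k ∈ range (n+1),
            risingFactorial α (n+1-(k+1)) / ((n+1-(k+1)).factorial : ℝ) * ((k+1).choose (j'+1) : ℝ)
            = (∑ k ∈ range (n+1),
                risingFactorial α (n-k) / ((n-k).factorial : ℝ) * (k.choose (j'+1) : ℝ))
              + ∑ k ∈ range (n+1),
                risingFactorial α (n-k) / ((n-k).factorial : ℝ) * (k.choose j' : ℝ) := by
          rw [← Finset.sum_add_distrib]
          refine Finset.sum_congr rfl fun k _ => ?_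
          rw [hshift k, Nat.choose_succ_succ]
          push_cast
          ring
        rw [hsplit, IH (j'+1) hjn', IH j' (by omega)]
        simp only [Nat.choose_zero_right, Nat.cast_one, mul_one, Nat.choose_eq_zero_of_lt
          (Nat.succ_pos j'), Nat.cast_zero, mul_zero, zero_add]
        -- now pure algebra
        obtain ⟨m, hm⟩ : ∃ m, n - (j'+1) = m := ⟨n - (j'+1), rfl⟩
        have hm1 : n - j' = m + 1 := by omega
        have hm2 : n + 1 - (j'+1) = m + 1 := by omega
        rw [hm, hm1, hm2]
        have hcast : (m : ℝ) + 1 + ((α+1) + j') = (α+1) + n := by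
          have : (n:ℝ) = (m:ℝ) + 1 + j' := by
            have : n = m + 1 + j' := by omega
            exact_mod_cast congrArg (Nat.cast : ℕ → ℝ) this
          rw [this]; ring
        rw [rf_succ (α+1) n, rf_succ (α+1) j']
        have hmf : ((m+1).factorial : ℝ) = (m+1) * m.factorial := by
          rw [Nat.factorial_succ]; push_cast; ring
        rw [hmf]
        have h1 : (m.factorial : ℝ) ≠ 0 := Nat.cast_ne_zero.mpr m.factorial_ne_zero
        have h2 : risingFactorial (α+1) j' ≠ 0 := (rf_pos (by linarith) j').ne'
        have h3 : (α + 1 + (j' : ℝ)) ≠ 0 := by positivity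
        have h4 : ((m:ℝ) + 1) ≠ 0 := by positivity
        rw [← hcast]
        field_simp
        ring
    · -- j = n + 1
      have hj' : j = n + 1 := le_antisymm hj hjn
      subst hj'
      rw [Finset.sum_range_succ]
      have hzero : ∀ k ∈ range (n+1),
          risingFactorial α (n+1-k) / ((n+1-k).factorial : ℝ) * (k.choose (n+1) : ℝ) = 0 := by
        intro k hk
        rw [Nat.choose_eq_zero_of_lt (mem_range.mp hk)]
        simp
      rw [Finset.sum_eq_zero hzero]
      simp only [Nat.sub_self, Nat.choose_self, Nat.cast_one, mul_one, zero_add, rf_zero,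
        Nat.factorial_zero]
      rw [one_mul, one_div_one, div_self ((rf_pos (show (0:ℝ) < α + 1 by linarith) (n+1)).ne')]

lemma laguerreP_eq_sum_L0 (n : ℕ) (α : ℝ) (hα : 0 ≤ α) (x : ℝ) :
    laguerreP n α x
      = ∑ k ∈ range (n+1), risingFactorial α (n-k) / ((n-k).factorial : ℝ) * L0 k x := by
  have hrhs : ∀ k ∈ range (n+1),
      risingFactorial α (n-k) / ((n-k).factorial : ℝ) * L0 k x
      = ∑ j ∈ range (n+1), ((-1)^j * x^j / (j.factorial : ℝ)) *
          (risingFactorial α (n-k) / ((n-k).factorial : ℝ) * (k.choose j : ℝ)) := by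
    intro k hk
    have hkn : k ≤ n := Nat.lt_succ_iff.mp (mem_range.mp hk)
    have hext : L0 k x = ∑ j ∈ range (n+1), (-1) ^ j * (k.choose j : ℝ) * x ^ j / (j.factorial : ℝ) := by
      unfold L0
      apply Finset.sum_subset (by exact Finset.range_subset_range.mpr (by omega))
      intro j hj hnot
      have hkj : k < j := by
        simp only [mem_range] at hj hnot; omega
      rw [Nat.choose_eq_zero_of_lt hkj]
      simp
    rw [hext, Finset.mul_sum]
    exact Finset.sum_congr rfl fun j _ => by ring
  rw [Finset.sum_congr rfl hrhs, Finset.sum_comm]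
  unfold laguerreP
  rw [Finset.mul_sum]
  refine Finset.sum_congr rfl fun j hj => ?_
  have hjn : j ≤ n := Nat.lt_succ_iff.mp (mem_range.mp hj)
  rw [← Finset.mul_sum, connection_sum α hα n j hjn, rf_neg_nat n j hjn]
  have hdf : ((n-j).factorial : ℝ) * (n.descFactorial j : ℝ) = (n.factorial : ℝ) := by
    exact_mod_cast congrArg (Nat.cast : ℕ → ℝ) (Nat.factorial_mul_descFactorial hjn)
  have h1 : ((n-j).factorial : ℝ) ≠ 0 := Nat.cast_ne_zero.mpr (Nat.factorial_ne_zero _)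
  have h2 : (j.factorial : ℝ) ≠ 0 := Nat.cast_ne_zero.mpr (Nat.factorial_ne_zero _)
  have h3 : risingFactorial (α+1) j ≠ 0 := (rf_pos (by linarith) j).ne'
  rw [← hdf]
  have h4 : (n.descFactorial j : ℝ) ≠ 0 := by
    refine Nat.cast_ne_zero.mpr ?_
    simp [Nat.descFactorial_eq_zero_iff_lt, Nat.not_lt.mpr hjn]
  field_simp

end SzegoAux

/-- Szegő's inequality for Laguerre polynomials. -/
theorem szego_inequality (α : ℝ) (hα : 0 ≤ α) (x : ℝ) (hx : 0 ≤ x) (n : ℕ) :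
    |laguerreP n α x| ≤
      risingFactorial (α + 1) n / (Nat.factorial n : ℝ) * Real.exp (x / 2) := by
  open Finset SzegoAux in
  rw [laguerreP_eq_sum_L0 n α hα x]
  calc |∑ k ∈ range (n+1), risingFactorial α (n-k) / ((n-k).factorial : ℝ) * L0 k x|
      ≤ ∑ k ∈ range (n+1), |risingFactorial α (n-k) / ((n-k).factorial : ℝ) * L0 k x| :=
        Finset.abs_sum_le_sum_abs _ _
    _ ≤ ∑ k ∈ range (n+1),
          risingFactorial α (n-k) / ((n-k).factorial : ℝ) * Real.exp (x/2) := by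
        refine Finset.sum_le_sum fun k _ => ?_
        have hc : 0 ≤ risingFactorial α (n-k) / ((n-k).factorial : ℝ) :=
          div_nonneg (rf_nonneg hα _) (Nat.cast_nonneg _)
        rw [abs_mul, abs_of_nonneg hc]
        exact mul_le_mul_of_nonneg_left (L0_bound k x hx) hc
    _ = risingFactorial (α + 1) n / (Nat.factorial n : ℝ) * Real.exp (x / 2) := by
        rw [← Finset.sum_mul]
        congr 1
        have := connection_sum α hα n 0 (Nat.zero_le n)
        simp only [Nat.choose_zero_right, Nat.cast_one, mul_one, Nat.sub_zero, rf_zero] at this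
        rw [this]
end
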